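/- If X is a compact Hausdorff space with covering dimension 0, then for every n ≥ 1 the n-fold topological join X^{∗(n)} has covering dimension at most n − 1. -/

import Mathlib

open unitInterval

/-- `CovDimLE X n` : the Lebesgue covering dimension of `X` is at most `n`. -/
def CovDimLE (X : Type*) [TopologicalSpace X] (n : ℕ) : Prop :=
  ∀ (ι : Type) (U : ι → Set X), (∀ i, IsOpen (U i)) → (⋃ i, U i) = Set.univ →
    ∃ V : ι → Set X, (∀ i, IsOpen (V i)) ∧ (∀ i, V i ⊆ U i) ∧ (⋃ i, V i) = Set.univ ∧
      ∀ x : X, {i | x ∈ V i}.Finite ∧ {i | x ∈ V i}.ncard ≤ n + 1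

/-- The relation generating the join identifications. -/
def JoinRel (X Y : Type*) : (I × X × Y) → (I × X × Y) → Prop := fun p q =>
  (p.1 = 0 ∧ q.1 = 0 ∧ p.2.2 = q.2.2) ∨ (p.1 = 1 ∧ q.1 = 1 ∧ p.2.1 = q.2.1)

/-- The topological join `X ∗ Y`. -/
def Join (X Y : Type) [TopologicalSpace X] [TopologicalSpace Y] : Type :=
  Quot (JoinRel X Y)

instance (X Y : Type) [TopologicalSpace X] [TopologicalSpace Y] :
    TopologicalSpace (Join X Y) :=
  inferInstanceAs (TopologicalSpace (Quot (JoinRel X Y)))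

/-- Auxiliary: iterated joins together with their topologies.  `JoinNAux X k` is the
`(k+1)`-fold join `X^{∗(k+1)}`, with `X^{∗(1)} = X` and `X^{∗(k+2)} = X^{∗(k+1)} ∗ X`. -/
def JoinNAux (X : Type) [tX : TopologicalSpace X] : ℕ → Σ α : Type, TopologicalSpace α
  | 0 => ⟨X, tX⟩
  | k + 1 =>
    let p := JoinNAux X k
    letI := p.2
    ⟨Join p.1 X, inferInstanceAs (TopologicalSpace (Quot (JoinRel p.1 X)))⟩

/-- `JoinN X k` is the `(k+1)`-fold join `X^{∗(k+1)}`. -/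
def JoinN (X : Type) [TopologicalSpace X] (k : ℕ) : Type := (JoinNAux X k).1

instance (X : Type) [TopologicalSpace X] (k : ℕ) : TopologicalSpace (JoinN X k) :=
  (JoinNAux X k).2

/-!
Write a point of the `N`-fold join as `∑ tᵢ xᵢ`. Since `X` is zero-dimensional, the point is
determined by the numbers `tᵢ · 1_C(xᵢ)`, `C` clopen, which depend continuously on it; so the
join embeds in a product of copies of `ℝ`, and by compactness an open cover has a Lebesgue number
along finitely many of these coordinates, involving finitely many clopen sets `C`.

Cover the simplex of weights by `N` grids of open cubes of side `δ` in the first `N - 1` weights,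
the grids shifted by `δ / N` from one another: each weight lies on the boundary of at most one
grid, so every point lies in an open cube of some grid. Cut each cube further according to the
side of each `C` on which `xᵢ` lies, for the weights `tᵢ` bounded below on the cube; where `tᵢ`
is small the values `tᵢ · 1_C(xᵢ)` are small anyway. The pieces of one grid are disjoint and
small, so the `N` grids give a refinement of order at most `N`.
-/

open Set Topology Filter TopologicalSpace

noncomputable section

theorem CovDimLE.totallySeparatedSpace {X : Type*} [TopologicalSpace X] [T1Space X]
    (h : CovDimLE X 0) : TotallySeparatedSpace X := by
  refine totallySeparatedSpace_iff_exists_isClopen.mpr fun x y hxy => ?_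
  obtain ⟨V, hVo, hVU, hVcover, hVorder⟩ := h Bool (fun b => if b then {y}ᶜ else {x}ᶜ)
    (fun b => by cases b <;> exact isOpen_compl_singleton)
    (eq_univ_of_forall fun z => mem_iUnion.mpr <| by
      by_cases hz : z = x
      · exact ⟨true, by simpa [hz] using hxy⟩
      · exact ⟨false, by simpa using hz⟩)
  have hmem : ∀ z, z ∈ V true ∨ z ∈ V false := fun z => by
    obtain ⟨b, hb⟩ := mem_iUnion.mp (hVcover ▸ mem_univ z)
    cases b <;> simp [hb]
  have hdisj : ∀ z ∈ V true, z ∉ V false := fun z ht hf => by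
    have := (hVorder z).2
    rw [show {b | z ∈ V b} = univ from eq_univ_of_forall fun b => by cases b <;> assumption,
      ncard_univ] at this
    simp at this
  have hcompl : V true = (V false)ᶜ :=
    ext fun z => ⟨hdisj z, (hmem z).resolve_right⟩
  refine ⟨V true, ⟨hcompl ▸ (hVo false).isClosed_compl, hVo true⟩, ?_, fun hy => ?_⟩
  · exact (hmem x).resolve_right fun hx => by simpa using hVU false hx
  · simpa using hVU true hy

theorem covDimLE_of_colored_refinement {J : Type*} [TopologicalSpace J] {m : ℕ}
    (h : ∀ (ι : Type) (U : ι → Set J), (∀ j, IsOpen (U j)) → ⋃ j, U j = univ →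
      ∃ (Θ : Type) (P : Θ → Set J) (color : Θ → Fin (m + 1)), (∀ θ, IsOpen (P θ)) ∧
        ⋃ θ, P θ = univ ∧ (∀ θ, (P θ).Nonempty → ∃ j, P θ ⊆ U j) ∧
        ∀ θ θ' z, color θ = color θ' → z ∈ P θ → z ∈ P θ' → θ = θ') :
    CovDimLE J m := by
  intro ι U hU hcover
  obtain ⟨Θ, P, color, hPo, hPcover, hPU, hPdisj⟩ := h ι U hU hcover
  choose pick hpick using fun θ : {θ // (P θ).Nonempty} => hPU θ θ.2
  refine ⟨fun j => ⋃ (θ) (_ : pick θ = j), P θ, fun j => isOpen_biUnion fun θ _ => hPo θ,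
    fun j => iUnion₂_subset fun θ hθ => hθ ▸ hpick θ, ?_, fun z => ?_⟩
  · refine eq_univ_of_forall fun z => ?_
    obtain ⟨θ, hz⟩ := mem_iUnion.mp (hPcover ▸ mem_univ z)
    exact mem_iUnion.mpr ⟨pick ⟨θ, z, hz⟩, mem_iUnion₂.mpr ⟨⟨θ, z, hz⟩, rfl, hz⟩⟩
  have hmem : ∀ j : {j | z ∈ ⋃ (θ) (_ : pick θ = j), P θ}, ∃ θ, pick θ = j ∧ z ∈ P θ := by
    rintro ⟨j, hj⟩
    obtain ⟨θ, hθ, hz⟩ := mem_iUnion₂.mp hj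
    exact ⟨θ, hθ, hz⟩
  choose θ hθj hzθ using hmem
  have hinj : Function.Injective fun j => color (θ j) := fun j j' hc =>
    Subtype.ext <| by rw [← hθj, ← hθj j', Subtype.ext (hPdisj _ _ z hc (hzθ j) (hzθ j'))]
  refine ⟨finite_coe_iff.mp (Finite.of_injective _ hinj), ?_⟩
  rw [← Nat.card_coe_set_eq]
  simpa using Nat.card_le_card_of_injective _ hinj

theorem exists_finset_lebesgue_number_of_isInducing {J Ω ι : Type*} [TopologicalSpace J]
    [CompactSpace J] {Φ : J → Ω → ℝ} (hΦ : IsInducing Φ) {U : ι → Set J}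
    (hU : ∀ j, IsOpen (U j)) (hcover : ⋃ j, U j = univ) :
    ∃ F : Finset Ω, ∃ ε > 0, ∀ z, ∃ j, {w | ∀ ω ∈ F, dist (Φ w ω) (Φ z ω) < ε} ⊆ U j := by
  choose W hWo hWU using fun j => hΦ.isOpen_iff.mp (hU j)
  have hrange : range Φ ⊆ ⋃ j, W j := by
    rintro _ ⟨z, rfl⟩
    obtain ⟨j, hj⟩ := mem_iUnion.mp (hcover ▸ mem_univ z)
    exact mem_iUnion.mpr ⟨j, by rwa [← hWU j] at hj⟩
  obtain ⟨V, hV, hVW⟩ := lebesgue_number_lemma (isCompact_range hΦ.continuous) hWo hrange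
  have hbasis := HasBasis.iInf' fun ω : Ω => Metric.uniformity_basis_dist.comap
    fun p : (Ω → ℝ) × (Ω → ℝ) => (p.1 ω, p.2 ω)
  rw [← Pi.uniformity] at hbasis
  obtain ⟨⟨S, ε⟩, ⟨hS, hε⟩, hSV⟩ := hbasis.mem_iff.mp hV
  obtain ⟨ε₀, hε₀, hε₀S⟩ : ∃ ε₀ > 0, ∀ ω ∈ S, ε₀ < ε ω :=
    ((eventually_mem_nhdsWithin (s := Ioi (0 : ℝ)) (a := 0)).and ((eventually_all_finite hS).mpr
      fun ω hω => nhdsWithin_le_nhds (eventually_lt_nhds (hε ω hω)))).exists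
  refine ⟨hS.toFinset, ε₀, hε₀, fun z => ?_⟩
  obtain ⟨j, hj⟩ := hVW (Φ z) (mem_range_self z)
  refine ⟨j, fun w hw => ?_⟩
  rw [← hWU j]
  refine hj (hSV (mem_iInter₂.mpr fun ω hω => ?_))
  rw [mem_preimage, mem_ofPred_eq, dist_comm]
  exact (hw ω (hS.mem_toFinset.mpr hω)).trans (hε₀S ω hω)

theorem eq_of_forall_clopens_indicator_eq {X : Type*} [TopologicalSpace X]
    [TotallySeparatedSpace X] {x x' : X}
    (h : ∀ C : Clopens X, (C : Set X).indicator (1 : X → ℝ) x = (C : Set X).indicator 1 x') :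
    x = x' := by
  by_contra hne
  obtain ⟨U, hU, hx, hx'⟩ := exists_isClopen_of_totally_separated hne
  simpa [hx, show x' ∉ U from hx'] using h ⟨U, hU⟩

/-- `g i C z` stands for `tᵢ · 1_C(xᵢ)` where `z = ∑ tᵢ xᵢ`, so that `g i ⊤` is the weight `tᵢ`;
the point `xᵢ` itself is not recorded, as it is meaningless where `tᵢ = 0`. -/
structure JoinCoordinates (X J : Type) [TopologicalSpace X] [TopologicalSpace J] (N : ℕ) where
  g : Fin N → Clopens X → J → ℝ
  continuous_g : ∀ i C, Continuous (g i C)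
  g_nonneg : ∀ i C z, 0 ≤ g i C z
  sum_g_top : ∀ z, ∑ i, g i ⊤ z = 1
  g_add_g_compl : ∀ i C z, g i C z + g i Cᶜ z = g i ⊤ z
  g_eq_zero_or_eq_g_top : ∀ i C z, g i C z = 0 ∨ g i C z = g i ⊤ z
  injective : ∀ z z', (∀ i C, g i C z = g i C z') → z = z'

theorem Join.mk_eq_mk {X J : Type} [TopologicalSpace X] [TopologicalSpace J] {t : I}
    {a a' : J} {x x' : X} (ha : t ≠ 0 → a = a') (hx : t ≠ 1 → x = x') :
    (Quot.mk _ (t, a, x) : Join J X) = Quot.mk _ (t, a', x') := by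
  by_cases h0 : t = 0
  · exact Quot.sound (.inl ⟨h0, h0, hx (h0 ▸ zero_ne_one)⟩)
  by_cases h1 : t = 1
  · exact Quot.sound (.inr ⟨h1, h1, ha (h1 ▸ one_ne_zero)⟩)
  rw [ha h0, hx h1]

namespace JoinCoordinates

section Join

variable {X J : Type} [TopologicalSpace X] [TopologicalSpace J] {N : ℕ}
  (D : JoinCoordinates X J N)

theorem g_le_g_top (i : Fin N) (C : Clopens X) (z : J) : D.g i C z ≤ D.g i ⊤ z := by
  linarith [D.g_add_g_compl i C z, D.g_nonneg i Cᶜ z]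

theorem g_pos_or_g_compl_pos {i : Fin N} (C : Clopens X) {z : J} (h : 0 < D.g i ⊤ z) :
    0 < D.g i C z ∨ 0 < D.g i Cᶜ z := by
  by_contra! hle
  linarith [D.g_add_g_compl i C z, D.g_nonneg i C z, D.g_nonneg i Cᶜ z]

theorem g_eq_ite_of_pos {i : Fin N} {C : Clopens X} {z : J} {b : Bool}
    (h : 0 < D.g i (if b then C else Cᶜ) z) : D.g i C z = if b then D.g i ⊤ z else 0 := by
  cases b
  · have := D.g_add_g_compl i C z
    rcases D.g_eq_zero_or_eq_g_top i Cᶜ z with h' | h' <;> simp_all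
  · rcases D.g_eq_zero_or_eq_g_top i C z with h' | h' <;> simp_all

theorem eq_of_g_ite_pos {i : Fin N} {C : Clopens X} {z : J} {b b' : Bool}
    (h : 0 < D.g i (if b then C else Cᶜ) z) (h' : 0 < D.g i (if b' then C else Cᶜ) z) :
    b = b' := by
  have hb := D.g_eq_ite_of_pos h
  have hb' := D.g_eq_ite_of_pos h'
  cases b <;> cases b' <;> simp_all

def self [TotallySeparatedSpace X] : JoinCoordinates X X 1 where
  g _ C := (C : Set X).indicator 1
  continuous_g _ C := C.isClopen.continuous_indicator continuous_const
  g_nonneg _ _ _ := indicator_nonneg (fun _ _ => zero_le_one) _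
  sum_g_top _ := by simp
  g_add_g_compl _ C x := by simp [indicator_self_add_compl_apply]
  g_eq_zero_or_eq_g_top _ C x := by by_cases hx : x ∈ (C : Set X) <;> simp [hx]
  injective _ _ h := eq_of_forall_clopens_indicator_eq (h 0)

def joinG (D : JoinCoordinates X J N) (i : Fin (N + 1)) (C : Clopens X) : Join J X → ℝ :=
  Quot.lift (Fin.lastCases (fun p => (1 - p.1) * (C : Set X).indicator 1 p.2.2)
    (fun i' p => p.1 * D.g i' C p.2.1) i) <| by
    rintro ⟨t, a, x⟩ ⟨t', a', x'⟩ (⟨rfl, rfl, rfl⟩ | ⟨rfl, rfl, rfl⟩) <;>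
      induction i using Fin.lastCases <;> simp

@[simp] theorem joinG_last (C : Clopens X) (p : I × J × X) :
    D.joinG (Fin.last N) C (Quot.mk _ p) = (1 - p.1) * (C : Set X).indicator 1 p.2.2 := by
  simp [joinG]

@[simp] theorem joinG_castSucc (i : Fin N) (C : Clopens X) (p : I × J × X) :
    D.joinG i.castSucc C (Quot.mk _ p) = p.1 * D.g i C p.2.1 := by
  simp [joinG]

def join [TotallySeparatedSpace X] : JoinCoordinates X (Join J X) (N + 1) where
  g := D.joinG
  continuous_g i C := continuous_quot_lift _ <| by
    induction i using Fin.lastCases with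
    | last =>
      have := C.isClopen.continuous_indicator (f := (1 : X → ℝ)) continuous_const
      simp only [Fin.lastCases_last]
      fun_prop
    | cast i =>
      have := D.continuous_g i C
      simp only [Fin.lastCases_castSucc]
      fun_prop
  g_nonneg i C := Quot.ind fun ⟨t, a, x⟩ => by
    induction i using Fin.lastCases with
    | last =>
      simp only [joinG_last]
      exact mul_nonneg (sub_nonneg.mpr t.2.2) (indicator_nonneg (fun _ _ => zero_le_one) _)
    | cast i =>
      simp only [joinG_castSucc]
      exact mul_nonneg t.2.1 (D.g_nonneg i C a)
  sum_g_top := Quot.ind fun ⟨t, a, x⟩ => by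
    simp [Fin.sum_univ_castSucc, ← Finset.mul_sum, D.sum_g_top]
  g_add_g_compl i C := Quot.ind fun ⟨t, a, x⟩ => by
    induction i using Fin.lastCases with
    | last => simp [← mul_add, indicator_self_add_compl_apply]
    | cast i => simp [← mul_add, D.g_add_g_compl]
  g_eq_zero_or_eq_g_top i C := Quot.ind fun ⟨t, a, x⟩ => by
    induction i using Fin.lastCases with
    | last => by_cases hx : x ∈ (C : Set X) <;> simp [hx]
    | cast i => rcases D.g_eq_zero_or_eq_g_top i C a with h | h <;> simp [h]
  injective := by
    rintro ⟨t, a, x⟩ ⟨t', a', x'⟩ h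
    obtain rfl : t = t' := Subtype.ext <| by simpa using h (Fin.last N) ⊤
    refine Join.mk_eq_mk (fun ht => D.injective a a' fun i C => ?_) fun ht => ?_
    · exact (by simpa using h i.castSucc C : _ ∨ _).resolve_right ht
    · refine eq_of_forall_clopens_indicator_eq fun C =>
        (by simpa using h (Fin.last N) C : _ ∨ _).resolve_right ?_
      exact sub_ne_zero.mpr fun h1 => ht (Subtype.ext h1.symm)

end Join

end JoinCoordinates

def joinNCoordinates (X : Type) [TopologicalSpace X] [TotallySeparatedSpace X] :
    ∀ k, JoinCoordinates X (JoinN X k) (k + 1)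
  | 0 => .self
  | k + 1 => (joinNCoordinates X k).join

theorem compactSpace_joinN (X : Type) [TopologicalSpace X] [CompactSpace X] :
    ∀ k, CompactSpace (JoinN X k)
  | 0 => ‹_›
  | k + 1 => by
    have := compactSpace_joinN X k
    exact Quot.compactSpace (X := I × JoinN X k × X)

theorem floor_div_eq_of_mem_Ioo {δ o y : ℝ} {k : ℤ} (hδ : 0 < δ)
    (h : y ∈ Ioo (δ * k + o) (δ * k + o + δ)) : ⌊(y - o) / δ⌋ = k := by
  rw [Int.floor_eq_iff, le_div_iff₀ hδ, div_lt_iff₀ hδ]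
  constructor <;> linarith [h.1, h.2]

theorem mem_Ioo_floor_div {δ o y : ℝ} (hδ : 0 < δ) (hy : ∀ k : ℤ, y ≠ δ * k + o) :
    y ∈ Ioo (δ * ⌊(y - o) / δ⌋ + o) (δ * ⌊(y - o) / δ⌋ + o + δ) := by
  have h1 := (le_div_iff₀ hδ).mp (Int.floor_le ((y - o) / δ))
  have h2 := (div_lt_iff₀ hδ).mp (Int.lt_floor_add_one ((y - o) / δ))
  exact ⟨lt_of_le_of_ne (by linarith) (hy _).symm, by linarith⟩

def gridOffset {m : ℕ} (δ : ℝ) (c : Fin (m + 1)) : ℝ := δ * c / (m + 1)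

theorem eq_of_add_gridOffset_eq {m : ℕ} {δ : ℝ} (hδ : δ ≠ 0) {c c' : Fin (m + 1)} {k k' : ℤ}
    (h : δ * k + gridOffset δ c = δ * k' + gridOffset δ c') : c = c' := by
  have hZ : (c + (m + 1) * k : ℤ) = c' + (m + 1) * k' := by
    unfold gridOffset at h
    field_simp at h
    exact_mod_cast (by linarith : (c + (m + 1) * k : ℝ) = c' + (m + 1) * k')
  have := congrArg (· % ((m : ℤ) + 1)) hZ
  simp only [Int.add_mul_emod_self_left] at this
  rw [Int.emod_eq_of_lt (by omega) (by omega), Int.emod_eq_of_lt (by omega) (by omega)] at this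
  exact Fin.ext (by exact_mod_cast this)

theorem exists_gridOffset_forall_ne {m : ℕ} {δ : ℝ} (hδ : δ ≠ 0) (y : Fin m → ℝ) :
    ∃ c : Fin (m + 1), ∀ i (k : ℤ), y i ≠ δ * k + gridOffset δ c := by
  have hbad : ∀ i, ∃ c₀ : Fin (m + 1), ∀ c (k : ℤ), y i = δ * k + gridOffset δ c → c = c₀ := by
    intro i
    by_cases h : ∃ (c₀ : Fin (m + 1)) (k₀ : ℤ), y i = δ * k₀ + gridOffset δ c₀
    · obtain ⟨c₀, k₀, h₀⟩ := h
      exact ⟨c₀, fun c k hk => eq_of_add_gridOffset_eq hδ (hk.symm.trans h₀)⟩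
    · exact ⟨0, fun c k hk => absurd ⟨c, k, hk⟩ h⟩
  choose f hf using hbad
  obtain ⟨c, hc⟩ : ∃ c : Fin (m + 1), c ∉ range f := by
    by_contra! hsurj
    have := Fintype.card_le_of_surjective f fun c => hsurj c
    simp at this
  exact ⟨c, fun i k hk => hc ⟨i, (hf i c k hk).symm⟩⟩

/-- Lower bounds for the weights on `cube δ c v`, the last weight being `1` minus the others. -/
def lowerCorner {m : ℕ} (δ : ℝ) (c : Fin (m + 1)) (v : Fin m → ℤ) : Fin (m + 1) → ℝ :=
  Fin.lastCases (1 - ∑ i, (δ * v i + gridOffset δ c + δ)) fun i => δ * v i + gridOffset δ c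

@[simp] theorem lowerCorner_castSucc {m : ℕ} (δ : ℝ) (c : Fin (m + 1)) (v : Fin m → ℤ)
    (i : Fin m) : lowerCorner δ c v i.castSucc = δ * v i + gridOffset δ c := by
  simp [lowerCorner]

@[simp] theorem lowerCorner_last {m : ℕ} (δ : ℝ) (c : Fin (m + 1)) (v : Fin m → ℤ) :
    lowerCorner δ c v (Fin.last m) = 1 - ∑ i, (δ * v i + gridOffset δ c + δ) := by
  simp [lowerCorner]

namespace JoinCoordinates

section Pieces

variable {X J : Type} [TopologicalSpace X] [TopologicalSpace J] {m : ℕ}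
  (D : JoinCoordinates X J (m + 1)) (𝒞 : Finset (Clopens X)) (δ : ℝ)

def cube (c : Fin (m + 1)) (v : Fin m → ℤ) : Set J :=
  {z | ∀ i : Fin m,
    D.g i.castSucc ⊤ z ∈ Ioo (δ * v i + gridOffset δ c) (δ * v i + gridOffset δ c + δ)}

def signSet (i : Fin (m + 1)) (s : 𝒞 → Bool) : Set J :=
  {z | ∀ C : 𝒞, 0 < D.g i (if s C then ↑C else (↑C)ᶜ) z}

/-- `s i` records on which side of each `C ∈ 𝒞` the point `xᵢ` lies. It is only meaningful when
the weight `tᵢ` is bounded below on the cube, and is normalized to `false` otherwise so that the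
pieces of one color are disjoint. -/
def piece (c : Fin (m + 1)) (v : Fin m → ℤ) (s : Fin (m + 1) → 𝒞 → Bool) : Set J :=
  D.cube δ c v ∩ {z | ∀ i, if δ ≤ lowerCorner δ c v i then z ∈ D.signSet 𝒞 i (s i)
    else s i = fun _ => false}

theorem g_top_mem_Icc_of_mem_cube {c : Fin (m + 1)} {v : Fin m → ℤ} {z : J} (hδ : 0 ≤ δ)
    (hz : z ∈ D.cube δ c v) (i : Fin (m + 1)) :
    D.g i ⊤ z ∈ Icc (lowerCorner δ c v i) (lowerCorner δ c v i + (m + 1) * δ) := by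
  induction i using Fin.lastCases with
  | cast i =>
    have := hz i
    simp only [mem_Icc, lowerCorner_castSucc]
    constructor <;> nlinarith [this.1, this.2, (m.cast_nonneg : (0 : ℝ) ≤ m)]
  | last =>
    have hsum := D.sum_g_top z
    rw [Fin.sum_univ_castSucc] at hsum
    have hlo : ∑ i : Fin m, (δ * v i + gridOffset δ c) ≤ ∑ i : Fin m, D.g i.castSucc ⊤ z :=
      Finset.sum_le_sum fun i _ => (hz i).1.le
    have hhi : ∑ i : Fin m, D.g i.castSucc ⊤ z ≤ ∑ i : Fin m, (δ * v i + gridOffset δ c + δ) :=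
      Finset.sum_le_sum fun i _ => (hz i).2.le
    simp only [Finset.sum_add_distrib, Finset.sum_const, Finset.card_univ, Fintype.card_fin,
      nsmul_eq_mul] at hlo hhi
    simp only [mem_Icc, lowerCorner_last, Finset.sum_add_distrib, Finset.sum_const,
      Finset.card_univ, Fintype.card_fin, nsmul_eq_mul]
    constructor <;> linarith

theorem isOpen_piece (c : Fin (m + 1)) (v : Fin m → ℤ) (s : Fin (m + 1) → 𝒞 → Bool) :
    IsOpen (D.piece 𝒞 δ c v s) := by
  have hcube : IsOpen (D.cube δ c v) := by
    simp only [cube, ofPred_forall]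
    exact isOpen_iInter_of_finite fun i => isOpen_Ioo.preimage (D.continuous_g _ _)
  have hsign (i : Fin (m + 1)) (s : 𝒞 → Bool) : IsOpen (D.signSet 𝒞 i s) := by
    simp only [signSet, ofPred_forall]
    exact isOpen_iInter_of_finite fun C => isOpen_lt continuous_const (D.continuous_g _ _)
  refine hcube.inter ?_
  simp only [ofPred_forall]
  refine isOpen_iInter_of_finite fun i => ?_
  split_ifs
  · exact hsign i (s i)
  · exact isOpen_const

theorem exists_mem_piece (hδ : 0 < δ) (z : J) : ∃ c v s, z ∈ D.piece 𝒞 δ c v s := by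
  obtain ⟨c, hc⟩ := exists_gridOffset_forall_ne hδ.ne' fun i : Fin m => D.g i.castSucc ⊤ z
  set v : Fin m → ℤ := fun i => ⌊(D.g i.castSucc ⊤ z - gridOffset δ c) / δ⌋
  have hz : z ∈ D.cube δ c v := fun i => mem_Ioo_floor_div hδ (hc i)
  refine ⟨c, v, fun i C => decide (δ ≤ lowerCorner δ c v i ∧ 0 < D.g i C z), hz, fun i => ?_⟩
  split_ifs with hi
  · have hpos : 0 < D.g i ⊤ z := by linarith [(D.g_top_mem_Icc_of_mem_cube δ hδ.le hz i).1]
    intro C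
    by_cases hC : 0 < D.g i C z
    · simp [hi, hC]
    · simpa [hi, hC] using (D.g_pos_or_g_compl_pos C hpos).resolve_left hC
  · simp [hi]

theorem eq_of_mem_piece (hδ : 0 < δ) {c : Fin (m + 1)} {v v' : Fin m → ℤ}
    {s s' : Fin (m + 1) → 𝒞 → Bool} {z : J} (h : z ∈ D.piece 𝒞 δ c v s)
    (h' : z ∈ D.piece 𝒞 δ c v' s') : v = v' ∧ s = s' := by
  obtain rfl : v = v' := funext fun i => by
    rw [← floor_div_eq_of_mem_Ioo hδ (h.1 i), floor_div_eq_of_mem_Ioo hδ (h'.1 i)]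
  refine ⟨rfl, funext fun i => ?_⟩
  have hi := h.2 i
  have hi' := h'.2 i
  split_ifs at hi hi'
  · exact funext fun C => D.eq_of_g_ite_pos (hi C) (hi' C)
  · rw [hi, hi']

theorem abs_g_sub_le_of_mem_piece (hδ : 0 < δ) {c : Fin (m + 1)} {v : Fin m → ℤ}
    {s : Fin (m + 1) → 𝒞 → Bool} {z w : J} (hz : z ∈ D.piece 𝒞 δ c v s)
    (hw : w ∈ D.piece 𝒞 δ c v s) (i : Fin (m + 1)) (C : 𝒞) :
    |D.g i C w - D.g i C z| ≤ (m + 2) * δ := by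
  obtain ⟨hz₁, hz₂⟩ := D.g_top_mem_Icc_of_mem_cube δ hδ.le hz.1 i
  obtain ⟨hw₁, hw₂⟩ := D.g_top_mem_Icc_of_mem_cube δ hδ.le hw.1 i
  have hzi := hz.2 i
  have hwi := hw.2 i
  split_ifs at hzi hwi
  · rw [D.g_eq_ite_of_pos (hzi C), D.g_eq_ite_of_pos (hwi C)]
    split_ifs
    · rw [abs_le]
      constructor <;> linarith
    · simp only [sub_zero, abs_zero]
      positivity
  · rw [abs_le]
    constructor <;> linarith [D.g_nonneg i C z, D.g_nonneg i C w, D.g_le_g_top i C z,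
      D.g_le_g_top i C w]

end Pieces

theorem covDimLE {X J : Type} [TopologicalSpace X] [TopologicalSpace J] [CompactSpace J] {m : ℕ}
    (D : JoinCoordinates X J (m + 1)) : CovDimLE J m := by
  classical
  refine covDimLE_of_colored_refinement fun ι U hU hcover => ?_
  let Φ : J → Fin (m + 1) × Clopens X → ℝ := fun z p => D.g p.1 p.2 z
  have hΦ : IsInducing Φ := ((continuous_pi fun p => D.continuous_g p.1 p.2).isClosedEmbedding
    fun z z' h => D.injective z z' fun i C => congrFun h (i, C)).isInducing
  obtain ⟨F, ε, hε, hF⟩ := exists_finset_lebesgue_number_of_isInducing hΦ hU hcover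
  set δ := ε / (2 * (m + 2))
  have hδ : 0 < δ := by positivity
  set 𝒞 := F.image Prod.snd
  refine ⟨Fin (m + 1) × (Fin m → ℤ) × (Fin (m + 1) → 𝒞 → Bool),
    fun θ => D.piece 𝒞 δ θ.1 θ.2.1 θ.2.2, Prod.fst, fun θ => D.isOpen_piece 𝒞 δ _ _ _,
    eq_univ_of_forall fun z => ?_, fun θ ⟨z, hz⟩ => ?_, fun θ θ' z hc hz hz' => ?_⟩
  · obtain ⟨c, v, s, h⟩ := D.exists_mem_piece 𝒞 δ hδ z
    exact mem_iUnion.mpr ⟨(c, v, s), h⟩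
  · obtain ⟨j, hj⟩ := hF z
    refine ⟨j, fun w hw => hj fun ω hω => ?_⟩
    calc dist (Φ w ω) (Φ z ω) ≤ (m + 2) * δ :=
          D.abs_g_sub_le_of_mem_piece 𝒞 δ hδ hz hw ω.1 ⟨ω.2, Finset.mem_image_of_mem _ hω⟩
      _ < ε := by
          simp only [δ]
          field_simp
          linarith
  · obtain ⟨c, v, s⟩ := θ
    obtain ⟨c', v', s'⟩ := θ'
    obtain rfl : c = c' := hc
    obtain ⟨rfl, rfl⟩ := D.eq_of_mem_piece 𝒞 δ hδ hz hz'
    rfl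

end JoinCoordinates

end

/-- If `X` is compact Hausdorff with covering dimension `0`, then for every `n ≥ 1` the
`n`-fold join `X^{∗(n)} = JoinN X (n-1)` has covering dimension at most `n - 1`. -/
theorem covDim_joinN_le (X : Type) [TopologicalSpace X] [CompactSpace X] [T2Space X]
    (hX : CovDimLE X 0) :
    ∀ n : ℕ, 1 ≤ n → CovDimLE (JoinN X (n - 1)) (n - 1) := by
  intro n _
  have := hX.totallySeparatedSpace
  have := compactSpace_joinN X (n - 1)
  exact (joinNCoordinates X (n - 1)).covDimLE
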